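/- Let m, n, l ≥ 1, let H₀ ∈ ℂ^{l×m}, H₁ ∈ ℂ^{n×m}, H₂ ∈ ℂ^{l×n}, and let P₀, P₁, P₂ > 0. Let C₁ be a finite nonempty set of unit vectors in ℂ^m and C₂ a finite nonempty set of unit vectors in ℂ^n. Define F(a, b) = ab/(1 + a + b) for a, b ≥ 0, and let γ₂⋆ = sup{ P₂‖H₂w‖² : ‖w‖ = 1 }, attained by a unit vector g₁ ∈ ℂ^n. Define γ(s) = F(P₁‖H₁s‖², γ₂⋆) + P₀‖H₀s‖² for unit s ∈ ℂ^m, and let s⋆ be a unit vector attaining γ⋆ = sup{ γ(s) : ‖s‖ = 1 }. Let γ̃ = max over w₁ ∈ C₁ and w₂ ∈ C₂ of F(P₁‖H₁w₁‖², P₂‖H₂w₂‖²) + P₀‖H₀w₁‖². Then γ⋆ − γ̃ ≤ 2P₂‖H₂‖_F² · min_{w∈C₂} d(g₁, w) + 2(P₁‖H₁‖_F² + P₀‖H₀‖_F²) · min_{w∈C₁} d(s⋆, w), where d(u, v) = √(1 − |uᴴv|²). -/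

import Mathlib

/-- Euclidean norm of a complex vector. -/
noncomputable def cnorm {k : ℕ} (v : Fin k → ℂ) : ℝ :=
  Real.sqrt (∑ i, ‖v i‖ ^ 2)

/-- Squared Frobenius norm of a complex matrix. -/
noncomputable def frobSq {p q : ℕ} (A : Matrix (Fin p) (Fin q) ℂ) : ℝ :=
  ∑ i, ∑ j, ‖A i j‖ ^ 2

/-- Chordal distance between complex vectors: `d(u,v) = √(1 − |uᴴv|²)`. -/
noncomputable def cdist {k : ℕ} (u v : Fin k → ℂ) : ℝ :=
  Real.sqrt (1 - ‖dotProduct (star u) v‖ ^ 2)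

/-- End-to-end two-hop relay SNR with hop SNRs `a`, `b`. -/
noncomputable def snrF (a b : ℝ) : ℝ := a * b / (1 + a + b)

/-!
Let `w₁ ∈ C₁`, `w₂ ∈ C₂` be the codewords closest to `s⋆`, `g₁` in chordal distance; `γ̃` is at
least the total SNR at `(w₁, w₂)`. On `[0, ∞)²` the map `F` is nondecreasing and 1-Lipschitz in
each argument, so the loss is at most the sum of the losses of `γ₁`, `γ₂` and `γ₀`. For unit
vectors `u`, `v`, first rotate `v` by a phase so that `⟪u, v⟫ = |⟪u, v⟫| =: c` (this changes
neither `‖v‖` nor `‖H v‖`); then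
`‖H u‖² - ‖H v‖² = Re ⟪H (u - v), H (u + v)⟫ ≤ ‖H‖_F² ‖u - v‖ ‖u + v‖ = 2 ‖H‖_F² √(1 - c²)`.
-/

open scoped InnerProductSpace

theorem sq_norm_sub_sq_norm_le_norm_sub_mul_norm_add (𝕜 : Type*) {F : Type*} [RCLike 𝕜]
    [NormedAddCommGroup F] [InnerProductSpace 𝕜 F] (a b : F) :
    ‖a‖ ^ 2 - ‖b‖ ^ 2 ≤ ‖a - b‖ * ‖a + b‖ := by
  have h : ‖a‖ ^ 2 - ‖b‖ ^ 2 = RCLike.re ⟪a - b, a + b⟫_𝕜 := by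
    simp only [inner_sub_left, inner_add_right, map_add, map_sub, inner_re_symm (𝕜 := 𝕜) b a,
      inner_self_eq_norm_sq (𝕜 := 𝕜)]
    ring
  rw [h]
  exact (RCLike.re_le_norm _).trans (norm_inner_le_norm _ _)

section InnerProductSpace

variable {𝕜 E F : Type*} [RCLike 𝕜] [NormedAddCommGroup E] [InnerProductSpace 𝕜 E]
  [NormedAddCommGroup F] [InnerProductSpace 𝕜 F]

theorem norm_sub_mul_norm_add_of_norm_eq_one {u w : E} (hu : ‖u‖ = 1) (hw : ‖w‖ = 1) :
    ‖u - w‖ * ‖u + w‖ = 2 * √(1 - RCLike.re ⟪u, w⟫_𝕜 ^ 2) := by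
  have hsq : (‖u - w‖ * ‖u + w‖) ^ 2 = (2 * √(1 - RCLike.re ⟪u, w⟫_𝕜 ^ 2)) ^ 2 := by
    have hre : |RCLike.re ⟪u, w⟫_𝕜| ≤ 1 := by
      simpa [hu, hw] using (RCLike.abs_re_le_norm _).trans (norm_inner_le_norm (𝕜 := 𝕜) u w)
    rw [mul_pow, norm_sub_sq (𝕜 := 𝕜), norm_add_sq (𝕜 := 𝕜), mul_pow,
      Real.sq_sqrt (by nlinarith [abs_le.mp hre]), hu, hw]
    ring
  exact (pow_left_inj₀ (by positivity) (by positivity) two_ne_zero).mp hsq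

theorem exists_norm_eq_one_inner_smul_eq_norm (u v : E) :
    ∃ z : 𝕜, ‖z‖ = 1 ∧ ⟪u, z • v⟫_𝕜 = ‖⟪u, v⟫_𝕜‖ := by
  by_cases h : ⟪u, v⟫_𝕜 = 0
  · exact ⟨1, by simp [h]⟩
  · refine ⟨‖⟪u, v⟫_𝕜‖ / ⟪u, v⟫_𝕜, by simp [h], ?_⟩
    rw [inner_smul_right, div_mul_cancel₀ _ h]

theorem sq_norm_apply_sub_sq_norm_apply_le (T : E →ₗ[𝕜] F) {C : ℝ}
    (hT : ∀ x, ‖T x‖ ≤ C * ‖x‖) {u v : E} (hu : ‖u‖ = 1) (hv : ‖v‖ = 1) :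
    ‖T u‖ ^ 2 - ‖T v‖ ^ 2 ≤ 2 * C ^ 2 * √(1 - ‖⟪u, v⟫_𝕜‖ ^ 2) := by
  obtain ⟨z, hz, hzv⟩ := exists_norm_eq_one_inner_smul_eq_norm (𝕜 := 𝕜) u v
  have hw : ‖z • v‖ = 1 := by rw [norm_smul, hz, hv, one_mul]
  have hTw : ‖T (z • v)‖ = ‖T v‖ := by rw [map_smul, norm_smul, hz, one_mul]
  calc ‖T u‖ ^ 2 - ‖T v‖ ^ 2 ≤ ‖T (u - z • v)‖ * ‖T (u + z • v)‖ := by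
        rw [← hTw, map_sub, map_add]
        exact sq_norm_sub_sq_norm_le_norm_sub_mul_norm_add 𝕜 _ _
    _ ≤ C * ‖u - z • v‖ * (C * ‖u + z • v‖) :=
        mul_le_mul (hT _) (hT _) (norm_nonneg _) ((norm_nonneg _).trans (hT _))
    _ = C ^ 2 * (‖u - z • v‖ * ‖u + z • v‖) := by ring
    _ = 2 * C ^ 2 * √(1 - ‖⟪u, v⟫_𝕜‖ ^ 2) := by
        rw [norm_sub_mul_norm_add_of_norm_eq_one (𝕜 := 𝕜) hu hw, hzv, RCLike.ofReal_re]
        ring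

end InnerProductSpace

theorem frobSq_nonneg {p q : ℕ} (A : Matrix (Fin p) (Fin q) ℂ) : 0 ≤ frobSq A := by
  unfold frobSq; positivity

theorem cdist_nonneg {k : ℕ} (u v : Fin k → ℂ) : 0 ≤ cdist u v := Real.sqrt_nonneg _

theorem snrF_comm (a b : ℝ) : snrF a b = snrF b a := by
  unfold snrF; ring_nf

theorem snrF_sub_snrF_le_left {a a' b x : ℝ} (ha : 0 ≤ a) (ha' : 0 ≤ a') (hb : 0 ≤ b) (hx : 0 ≤ x)
    (h : a - a' ≤ x) : snrF a b - snrF a' b ≤ x := by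
  have hD : 0 < 1 + a + b := by positivity
  have hD' : 0 < 1 + a' + b := by positivity
  rw [snrF, snrF, div_sub_div _ _ hD.ne' hD'.ne', div_le_iff₀ (by positivity)]
  calc a * b * (1 + a' + b) - (1 + a + b) * (a' * b) = b * (1 + b) * (a - a') := by ring
    _ ≤ b * (1 + b) * x := by gcongr
    _ ≤ x * ((1 + a + b) * (1 + a' + b)) := by nlinarith [mul_nonneg hx hb, mul_nonneg hx ha]

theorem snrF_sub_snrF_le_add {a a' b b' x y : ℝ} (ha : 0 ≤ a) (ha' : 0 ≤ a') (hb : 0 ≤ b)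
    (hb' : 0 ≤ b') (hx : 0 ≤ x) (hy : 0 ≤ y) (hax : a - a' ≤ x) (hby : b - b' ≤ y) :
    snrF a b - snrF a' b' ≤ x + y := by
  have h₁ := snrF_sub_snrF_le_left ha ha' hb hx hax
  have h₂ := snrF_sub_snrF_le_left hb hb' ha' hy hby
  rw [snrF_comm b, snrF_comm b'] at h₂
  linarith

theorem cnorm_eq_norm_toLp {k : ℕ} (v : Fin k → ℂ) : cnorm v = ‖WithLp.toLp 2 v‖ := by
  rw [EuclideanSpace.norm_eq]; rfl

theorem cdist_eq_sqrt_one_sub_norm_inner {k : ℕ} (u v : Fin k → ℂ) :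
    cdist u v = √(1 - ‖⟪WithLp.toLp 2 u, WithLp.toLp 2 v⟫_ℂ‖ ^ 2) := by
  rw [cdist, EuclideanSpace.inner_toLp_toLp, dotProduct_comm]

open scoped Matrix.Norms.Frobenius in
theorem cnorm_mulVec_le {p q : ℕ} (H : Matrix (Fin p) (Fin q) ℂ) (x : Fin q → ℂ) :
    cnorm (H.mulVec x) ≤ √(frobSq H) * cnorm x := by
  have hH : ‖H‖ = √(frobSq H) := by
    simp only [Matrix.frobenius_norm_def, Real.rpow_two, frobSq, Real.sqrt_eq_rpow]
  rw [cnorm_eq_norm_toLp, cnorm_eq_norm_toLp, ← hH,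
    ← Matrix.frobenius_norm_replicateCol (ι := Unit),
    ← Matrix.frobenius_norm_replicateCol (ι := Unit), Matrix.replicateCol_mulVec]
  exact Matrix.frobenius_norm_mul _ _

theorem sq_cnorm_mulVec_sub_le {p q : ℕ} (H : Matrix (Fin p) (Fin q) ℂ) {u v : Fin q → ℂ}
    (hu : cnorm u = 1) (hv : cnorm v = 1) :
    cnorm (H.mulVec u) ^ 2 - cnorm (H.mulVec v) ^ 2 ≤ 2 * frobSq H * cdist u v := by
  have hT : ∀ x, ‖Matrix.toLpLin 2 2 H x‖ ≤ √(frobSq H) * ‖x‖ := fun x => by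
    have := cnorm_mulVec_le H x.ofLp
    rwa [cnorm_eq_norm_toLp, cnorm_eq_norm_toLp] at this
  have := sq_norm_apply_sub_sq_norm_apply_le (Matrix.toLpLin 2 2 H) hT
    (u := WithLp.toLp 2 u) (v := WithLp.toLp 2 v)
    (by rwa [← cnorm_eq_norm_toLp]) (by rwa [← cnorm_eq_norm_toLp])
  rw [Real.sq_sqrt (frobSq_nonneg H), ← cdist_eq_sqrt_one_sub_norm_inner] at this
  rwa [cnorm_eq_norm_toLp, cnorm_eq_norm_toLp]

theorem mul_sq_cnorm_mulVec_sub_le {p q : ℕ} (H : Matrix (Fin p) (Fin q) ℂ) {P : ℝ} (hP : 0 ≤ P)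
    {u v : Fin q → ℂ} (hu : cnorm u = 1) (hv : cnorm v = 1) :
    P * cnorm (H.mulVec u) ^ 2 - P * cnorm (H.mulVec v) ^ 2 ≤ P * (2 * frobSq H * cdist u v) := by
  rw [← mul_sub]
  exact mul_le_mul_of_nonneg_left (sq_cnorm_mulVec_sub_le H hu hv) hP

theorem stmt18_general (m n l : ℕ)
    (H₀ : Matrix (Fin l) (Fin m) ℂ) (H₁ : Matrix (Fin n) (Fin m) ℂ)
    (H₂ : Matrix (Fin l) (Fin n) ℂ)
    (P₀ P₁ P₂ : ℝ) (hP₀ : 0 < P₀) (hP₁ : 0 < P₁) (hP₂ : 0 < P₂)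
    (C₁ : Finset (Fin m → ℂ)) (hC₁ : C₁.Nonempty) (hC₁u : ∀ w ∈ C₁, cnorm w = 1)
    (C₂ : Finset (Fin n → ℂ)) (hC₂ : C₂.Nonempty) (hC₂u : ∀ w ∈ C₂, cnorm w = 1)
    (g₁ : Fin n → ℂ) (hg₁u : cnorm g₁ = 1)
    (sstar : Fin m → ℂ) (hsstaru : cnorm sstar = 1) :
    (snrF (P₁ * cnorm (H₁.mulVec sstar) ^ 2) (P₂ * cnorm (H₂.mulVec g₁) ^ 2) +
        P₀ * cnorm (H₀.mulVec sstar) ^ 2) -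
      ((C₁ ×ˢ C₂).sup' (hC₁.product hC₂) fun p =>
        snrF (P₁ * cnorm (H₁.mulVec p.1) ^ 2) (P₂ * cnorm (H₂.mulVec p.2) ^ 2) +
          P₀ * cnorm (H₀.mulVec p.1) ^ 2) ≤
    2 * P₂ * frobSq H₂ * (C₂.inf' hC₂ fun w => cdist g₁ w) +
      2 * (P₁ * frobSq H₁ + P₀ * frobSq H₀) * (C₁.inf' hC₁ fun w => cdist sstar w) := by
  obtain ⟨w₁, hw₁, hd₁⟩ := Finset.exists_mem_eq_inf' hC₁ (cdist sstar)
  obtain ⟨w₂, hw₂, hd₂⟩ := Finset.exists_mem_eq_inf' hC₂ (cdist g₁)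
  have hγ := Finset.le_sup' (fun p : (Fin m → ℂ) × (Fin n → ℂ) =>
    snrF (P₁ * cnorm (H₁.mulVec p.1) ^ 2) (P₂ * cnorm (H₂.mulVec p.2) ^ 2) +
      P₀ * cnorm (H₀.mulVec p.1) ^ 2) (Finset.mk_mem_product hw₁ hw₂)
  have hε₁ := mul_sq_cnorm_mulVec_sub_le H₁ hP₁.le hsstaru (hC₁u w₁ hw₁)
  have hε₂ := mul_sq_cnorm_mulVec_sub_le H₂ hP₂.le hg₁u (hC₂u w₂ hw₂)
  have hε₀ := mul_sq_cnorm_mulVec_sub_le H₀ hP₀.le hsstaru (hC₁u w₁ hw₁)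
  have hF := snrF_sub_snrF_le_add (by positivity) (by positivity) (by positivity) (by positivity)
    (by have := frobSq_nonneg H₁; have := cdist_nonneg sstar w₁; positivity)
    (by have := frobSq_nonneg H₂; have := cdist_nonneg g₁ w₂; positivity) hε₁ hε₂
  rw [hd₁, hd₂]
  linarith

/-- SNR loss bound for the quantized relay scheme with the direct link:
`γ⋆ − γ̃ ≤ 2P₂‖H₂‖_F² min_{w∈C₂} d(g₁,w) + 2(P₁‖H₁‖_F² + P₀‖H₀‖_F²) min_{w∈C₁} d(s⋆,w)`,
where `g₁` maximizes the relay-Rx SNR, `s⋆` maximizes the total SNR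
`γ(s) = F(P₁‖H₁s‖², γ₂⋆) + P₀‖H₀s‖²` over the unit sphere, and `γ̃` is the best total SNR
over the codebooks `C₁ × C₂`. -/
theorem stmt18 (m n l : ℕ) (hm : 1 ≤ m) (hn : 1 ≤ n) (hl : 1 ≤ l)
    (H₀ : Matrix (Fin l) (Fin m) ℂ) (H₁ : Matrix (Fin n) (Fin m) ℂ)
    (H₂ : Matrix (Fin l) (Fin n) ℂ)
    (P₀ P₁ P₂ : ℝ) (hP₀ : 0 < P₀) (hP₁ : 0 < P₁) (hP₂ : 0 < P₂)
    (C₁ : Finset (Fin m → ℂ)) (hC₁ : C₁.Nonempty) (hC₁u : ∀ w ∈ C₁, cnorm w = 1)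
    (C₂ : Finset (Fin n → ℂ)) (hC₂ : C₂.Nonempty) (hC₂u : ∀ w ∈ C₂, cnorm w = 1)
    (g₁ : Fin n → ℂ) (hg₁u : cnorm g₁ = 1)
    (hg₁ : ∀ w : Fin n → ℂ, cnorm w = 1 →
      P₂ * cnorm (H₂.mulVec w) ^ 2 ≤ P₂ * cnorm (H₂.mulVec g₁) ^ 2)
    (sstar : Fin m → ℂ) (hsstaru : cnorm sstar = 1)
    (hsstar : ∀ s : Fin m → ℂ, cnorm s = 1 →
      snrF (P₁ * cnorm (H₁.mulVec s) ^ 2) (P₂ * cnorm (H₂.mulVec g₁) ^ 2) +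
          P₀ * cnorm (H₀.mulVec s) ^ 2 ≤
        snrF (P₁ * cnorm (H₁.mulVec sstar) ^ 2) (P₂ * cnorm (H₂.mulVec g₁) ^ 2) +
          P₀ * cnorm (H₀.mulVec sstar) ^ 2) :
    (snrF (P₁ * cnorm (H₁.mulVec sstar) ^ 2) (P₂ * cnorm (H₂.mulVec g₁) ^ 2) +
        P₀ * cnorm (H₀.mulVec sstar) ^ 2) -
      ((C₁ ×ˢ C₂).sup' (hC₁.product hC₂) fun p =>
        snrF (P₁ * cnorm (H₁.mulVec p.1) ^ 2) (P₂ * cnorm (H₂.mulVec p.2) ^ 2) +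
          P₀ * cnorm (H₀.mulVec p.1) ^ 2) ≤
    2 * P₂ * frobSq H₂ * (C₂.inf' hC₂ fun w => cdist g₁ w) +
      2 * (P₁ * frobSq H₁ + P₀ * frobSq H₀) * (C₁.inf' hC₁ fun w => cdist sstar w) :=
  stmt18_general m n l H₀ H₁ H₂ P₀ P₁ P₂ hP₀ hP₁ hP₂ C₁ hC₁ hC₁u C₂ hC₂ hC₂u g₁ hg₁u sstar hsstaru
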